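/- Identifying two vertices lying in the same two-edge connected component of a graph T leaves the forest of two-edge connected components unchanged; identifying two vertices in distinct two-edge connected components corresponds to identifying the corresponding two vertices of the forest F(T), an operation that cannot increase the number of leaves. -/

import Mathlib

open scoped Classical

/-- A multigraph with edges indexed by `ι`; the `k`-th edge goes from
`(ends k).1` (source) to `(ends k).2` (target).  A *linear graph of order `K`*
in the sense of the paper is an `MGraph (Fin K)`. -/
structure MGraph (ι : Type) where
  V : Type
  [fintV : Fintype V]
  [decV : DecidableEq V]
  ends : ι → V × V

attribute [instance] MGraph.fintV MGraph.decV

namespace MGraph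

variable {ι : Type} [Fintype ι] [DecidableEq ι]

/-- Adjacency using only the edges in `s` (undirected). -/
def adjOn (G : MGraph ι) (s : Set ι) (v w : G.V) : Prop :=
  ∃ e ∈ s, G.ends e = (v, w) ∨ G.ends e = (w, v)

/-- Connectivity (as a setoid) of the subgraph with edge set `s`. -/
def reachSetoid (G : MGraph ι) (s : Set ι) : Setoid G.V :=
  ⟨Relation.EqvGen (G.adjOn s), Relation.EqvGen.is_equivalence _⟩

/-- Number of connected components of the subgraph with edge set `s`
(on the full vertex set). -/
noncomputable def ncomp (G : MGraph ι) (s : Set ι) : ℕ :=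
  Fintype.card (Quotient (G.reachSetoid s))

/-- A cutting edge (bridge): removing it increases the number of connected
components. -/
def IsBridge (G : MGraph ι) (e : ι) : Prop :=
  G.ncomp Set.univ < G.ncomp {x | x ≠ e}

/-- Two vertices are in the same two-edge connected component iff they are
connected using no cutting edge. -/
def tecSetoid (G : MGraph ι) : Setoid G.V := G.reachSetoid {e | ¬ G.IsBridge e}

/-- The forest of two-edge connected components: vertices are the two-edge
connected components, edges are the cutting edges. -/
noncomputable def forest (G : MGraph ι) : MGraph {e : ι // G.IsBridge e} where
  V := Quotient G.tecSetoid
  ends := fun e => (Quotient.mk _ (G.ends e.1).1, Quotient.mk _ (G.ends e.1).2)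

/-- Degree of a vertex (loops counted twice). -/
noncomputable def deg (G : MGraph ι) (v : G.V) : ℕ :=
  (Finset.univ.filter (fun e : ι => (G.ends e).1 = v)).card
  + (Finset.univ.filter (fun e : ι => (G.ends e).2 = v)).card

/-- Number of leaves, with the convention that an isolated vertex counts as
two leaves. -/
noncomputable def leafCount (G : MGraph ι) : ℕ :=
  ∑ v : G.V, if G.deg v = 0 then 2 else if G.deg v = 1 then 1 else 0

/-- `𝔏(G)`: the number of leaves of the forest of two-edge connected
components of `G` (an isolated two-edge connected component counts twice). -/
noncomputable def LL (G : MGraph ι) : ℕ := G.forest.leafCount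

/-- The quotient graph of `G` by a partition (setoid) of its vertex set. -/
noncomputable def quot (G : MGraph ι) (s : Setoid G.V) : MGraph ι where
  V := Quotient s
  ends := fun e => (Quotient.mk s (G.ends e).1, Quotient.mk s (G.ends e).2)

end MGraph

/-- The minimal linear graph `T₀` of order `K`: vertex set `[2K]` is encoded as
`Fin K ⊕ Fin K` (targets `1,…,K` on the left, sources `K+1,…,2K` on the
right), the `k`-th edge going from `K+k` to `k`. -/
def T0 (K : ℕ) : MGraph (Fin K) where
  V := Fin K ⊕ Fin K
  ends := fun k => (Sum.inr k, Sum.inl k)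

namespace MGraph

/-- The elementary linear form `Tr_{N,T}` of a linear graph `T` of order `K`,
evaluated on the elementary tensor `A₁ ⊗ ⋯ ⊗ A_K`. -/
noncomputable def gTrace {K : ℕ} (G : MGraph (Fin K)) (N : ℕ)
    (A : Fin K → Matrix (Fin N) (Fin N) ℂ) : ℂ :=
  ∑ φ : G.V → Fin N, ∏ k : Fin K, A k (φ (G.ends k).2) (φ (G.ends k).1)

/-- The injective linear form `Tr⁰_{N,T}`: only injective maps `φ : V → [N]`
are summed. -/
noncomputable def gTrace0 {K : ℕ} (G : MGraph (Fin K)) (N : ℕ)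
    (A : Fin K → Matrix (Fin N) (Fin N) ℂ) : ℂ :=
  ∑ φ : G.V → Fin N,
    if Function.Injective φ then ∏ k : Fin K, A k (φ (G.ends k).2) (φ (G.ends k).1) else 0

end MGraph

/-- All partitions of a finite set, as setoids. -/
noncomputable instance setoidFintype (V : Type*) [Fintype V] [DecidableEq V] :
    Fintype (Setoid V) :=
  Fintype.ofSurjective (fun g : V → V => Setoid.ker g)
    (fun s => ⟨fun v => (Quotient.mk s v).out, Setoid.ext fun x y => by
      constructor
      · intro h
        have h2 : Quotient.mk s x = Quotient.mk s y := by
          have hx := Quotient.out_eq (Quotient.mk s x)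
          have hy := Quotient.out_eq (Quotient.mk s y)
          rw [← hx, ← hy]
          exact congrArg (Quotient.mk s) h
        exact Quotient.exact h2
      · intro h
        show (Quotient.mk s x).out = (Quotient.mk s y).out
        rw [Quotient.sound h]⟩)

/-- An isomorphism of edge-indexed multigraphs: a bijection of vertices and a
bijection of edge indices compatible with sources and targets. -/
structure MGraphIso {ι κ : Type} (G : MGraph ι) (H : MGraph κ) where
  vequiv : G.V ≃ H.V
  eequiv : ι ≃ κ
  ends_eq : ∀ e, H.ends (eequiv e) = (vequiv (G.ends e).1, vequiv (G.ends e).2)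

/-- The partition identifying the two vertices `a` and `b` (and nothing
else). -/
def glueSetoid {V : Type*} (a b : V) : Setoid V :=
  ⟨Relation.EqvGen (fun x y => x = a ∧ y = b), Relation.EqvGen.is_equivalence _⟩


/-!
Quotienting `T` by a partition `σ` of its vertices never turns a non-bridge into a bridge, so the
forest `F(T / σ)` arises from `F(T)` by deleting the bridges that die and merging vertices
along the projection `π : F(T) → F(T / σ)`; a dead bridge has both ends in one fibre of `π`.
Adding `k` bridges to the subgraph of non-bridges lowers its number of components by exactly `k`,
so `F(T)` is a forest: a fibre with `k` vertices contains at most `k - 1` dead bridges, and the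
total degree of the fibre exceeds the degree of its image by at most `2k - 2`. Writing the leaf
count as `∑ v, (2 - deg v)` (truncated subtraction), each fibre therefore contributes at least as
many leaves to `F(T)` as its image does to `F(T / σ)`.

When `a` and `b` are joined by a path of non-bridges, that path survives the removal of any bridge
`e`, so gluing `a` to `b` does not reconnect the ends of `e`: bridges, and with them the two-edge
connected components, are unchanged.
-/

open Finset Function

namespace Setoid

variable {V W : Type*}

noncomputable def quotientEquivOfSurjective {α : Setoid V} {β : Setoid W} (p : V → W)
    (hp : Surjective p) (h : ∀ x y, α x y ↔ β (p x) (p y)) : Quotient α ≃ Quotient β :=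
  Equiv.ofBijective (Quotient.map p fun x y => (h x y).1)
    ⟨fun c d => Quotient.inductionOn₂ c d fun x y hxy =>
      Quotient.sound ((h x y).2 (Quotient.exact hxy)),
     fun c => Quotient.inductionOn c fun w =>
      (hp w).elim fun v hv => ⟨⟦v⟧, congrArg _ hv⟩⟩

end Setoid

theorem card_filter_eq_card_filter_comp_add_notMem_range {ι κ : Type*} [Fintype ι] [Fintype κ]
    {j : κ → ι} (hj : Injective j) (P : ι → Prop) [DecidablePred P] :
    #{e | P e} = #{k | P (j k)} + #{e | P e ∧ e ∉ Set.range j} := by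
  rw [← card_filter_add_card_filter_not (p := (· ∈ Set.range j)), filter_filter, filter_filter]
  congr 1
  refine (card_nbij j (fun k hk => by simpa using hk) hj.injOn fun e he => ?_).symm
  simp only [coe_filter, mem_univ, true_and] at he
  obtain ⟨hk, k, rfl⟩ := he
  exact ⟨k, by simpa using hk, rfl⟩

section Glue

variable {V : Type*} {x y : V}

theorem glueSetoid_rel : glueSetoid x y x y := Relation.EqvGen.rel _ _ ⟨rfl, rfl⟩

variable [DecidableEq V]

def glueMap (hxy : x ≠ y) (v : V) : {v // v ≠ y} :=
  if h : v = y then ⟨x, hxy⟩ else ⟨v, h⟩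

theorem glueMap_surjective (hxy : x ≠ y) : Surjective (glueMap hxy) :=
  fun w => ⟨w, by simp [glueMap, w.2]⟩

theorem glueSetoid_eq_ker (hxy : x ≠ y) : glueSetoid x y = Setoid.ker (glueMap hxy) := by
  have h_self : ∀ v, glueSetoid x y v (glueMap hxy v) := by
    intro v
    unfold glueMap
    split_ifs with hv
    · exact hv ▸ (glueSetoid x y).symm glueSetoid_rel
    · exact (glueSetoid x y).refl v
  refine le_antisymm ?_ fun v w hvw => ?_
  · exact Setoid.eqvGen_le (by rintro _ _ ⟨rfl, rfl⟩; simp [glueMap, hxy])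
  · exact (glueSetoid x y).trans (h_self v)
      (Setoid.ker_def.1 hvw ▸ (glueSetoid x y).symm (h_self w))

theorem card_quotient_glueSetoid_add_one [Fintype V] (hxy : x ≠ y) :
    Fintype.card (Quotient (glueSetoid x y)) + 1 = Fintype.card V := by
  rw [glueSetoid_eq_ker hxy, Fintype.card_congr (Setoid.quotientKerEquivOfSurjective _
    (glueMap_surjective hxy)), Fintype.card_subtype_compl, Fintype.card_subtype_eq]
  have : 0 < Fintype.card V := Fintype.card_pos_iff.2 ⟨x⟩
  omega

end Glue

namespace MGraph

variable {ι : Type} (G : MGraph ι) {s t : Set ι}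

theorem reachSetoid_ends {e : ι} (he : e ∈ s) : G.reachSetoid s (G.ends e).1 (G.ends e).2 :=
  Relation.EqvGen.rel _ _ ⟨e, he, Or.inl rfl⟩

theorem reachSetoid_le_iff {r : Setoid G.V} :
    G.reachSetoid s ≤ r ↔ ∀ e ∈ s, r (G.ends e).1 (G.ends e).2 := by
  refine ⟨fun h e he => h (G.reachSetoid_ends he), fun h => Setoid.eqvGen_le ?_⟩
  rintro v w ⟨e, he, hvw | hvw⟩
  · simpa [hvw] using h e he
  · simpa [hvw] using r.symm (h e he)

theorem reachSetoid_mono (hst : s ⊆ t) : G.reachSetoid s ≤ G.reachSetoid t :=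
  G.reachSetoid_le_iff.2 fun _ he => G.reachSetoid_ends (hst he)

theorem ncomp_insert_add_one {e : ι} (he : ¬ G.reachSetoid s (G.ends e).1 (G.ends e).2) :
    G.ncomp (insert e s) + 1 = G.ncomp s := by
  let u₁ : Quotient (G.reachSetoid s) := ⟦(G.ends e).1⟧
  let u₂ : Quotient (G.reachSetoid s) := ⟦(G.ends e).2⟧
  have hrel : ∀ x y, G.reachSetoid (insert e s) x y ↔ glueSetoid u₁ u₂ ⟦x⟧ ⟦y⟧ := by
    refine fun x y => ⟨fun hxy => ?_, fun hxy => ?_⟩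
    · refine Quotient.exact ((G.reachSetoid_le_iff (r := Setoid.ker fun v =>
        (⟦⟦v⟧⟧ : Quotient (glueSetoid u₁ u₂)))).2 ?_ hxy)
      rintro f (rfl | hf)
      · exact Quotient.sound glueSetoid_rel
      · exact congrArg _ (Quotient.sound (G.reachSetoid_ends hf))
    · let merge : Quotient (G.reachSetoid s) → Quotient (G.reachSetoid (insert e s)) :=
        Quotient.map id (G.reachSetoid_mono (Set.subset_insert e s))
      have : glueSetoid u₁ u₂ ≤ Setoid.ker merge := Setoid.eqvGen_le <| by
        rintro _ _ ⟨rfl, rfl⟩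
        exact Quotient.sound (G.reachSetoid_ends (Set.mem_insert e s))
      exact Quotient.exact (this hxy)
  rw [ncomp, ncomp,
    Fintype.card_congr (Setoid.quotientEquivOfSurjective _ Quotient.mk_surjective hrel)]
  exact card_quotient_glueSetoid_add_one fun h => he (Quotient.exact h)

theorem isBridge_iff {e : ι} :
    G.IsBridge e ↔ ¬ G.reachSetoid {x | x ≠ e} (G.ends e).1 (G.ends e).2 := by
  constructor
  · intro hb hr
    have heq : G.reachSetoid Set.univ = G.reachSetoid {x | x ≠ e} := by
      refine le_antisymm (G.reachSetoid_le_iff.2 fun f _ => ?_)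
        (G.reachSetoid_mono (Set.subset_univ _))
      by_cases hf : f = e
      · exact hf ▸ hr
      · exact G.reachSetoid_ends hf
    exact hb.ne (by rw [ncomp, ncomp, heq])
  · intro hr
    have h := G.ncomp_insert_add_one hr
    rw [show insert e {x | x ≠ e} = Set.univ from Set.eq_univ_of_forall fun x => by
      by_cases hx : x = e <;> simp [hx]] at h
    unfold IsBridge
    omega

theorem ncomp_union_add_card (S : Finset ι) (hS : ∀ e ∈ S, G.IsBridge e ∧ e ∉ s) :
    G.ncomp (s ∪ S) + S.card = G.ncomp s := by
  induction S using Finset.induction_on with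
  | empty => simp
  | insert e S he ih =>
    have hsub : s ∪ ↑S ⊆ {x | x ≠ e} := by
      rintro f (hf | hf) rfl
      · exact (hS f (mem_insert_self f S)).2 hf
      · exact he hf
    have h_add := G.ncomp_insert_add_one (s := s ∪ ↑S) (e := e) fun h =>
      G.isBridge_iff.1 (hS e (mem_insert_self e S)).1 (G.reachSetoid_mono hsub h)
    have h_ih := ih fun f hf => hS f (mem_insert_of_mem hf)
    rw [coe_insert, Set.union_insert, card_insert_of_notMem he]
    omega

theorem ncomp_add_one_le (B : Finset (Quotient (G.reachSetoid s))) (hB : B.Nonempty)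
    (ht : ∀ e ∈ t, e ∉ s → ⟦(G.ends e).1⟧ ∈ B ∧ ⟦(G.ends e).2⟧ ∈ B) :
    G.ncomp s + 1 ≤ G.ncomp t + B.card := by
  let g : G.V → Option {c // c ∉ B} := fun v =>
    if h : ⟦v⟧ ∈ B then none else some ⟨⟦v⟧, h⟩
  have hg : G.reachSetoid t ≤ Setoid.ker g := by
    refine G.reachSetoid_le_iff.2 fun e he => ?_
    by_cases hes : e ∈ s
    · simp [g, Quotient.sound (G.reachSetoid_ends hes)]
    · simp [g, ht e he hes]
  have hsurj : Surjective (Quotient.lift g fun _ _ h => hg h) := by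
    rintro (_ | ⟨c, hc⟩)
    · obtain ⟨c, hc⟩ := hB
      obtain ⟨v, rfl⟩ := Quotient.mk_surjective c
      exact ⟨⟦v⟧, by simp [g, hc]⟩
    · obtain ⟨v, rfl⟩ := Quotient.mk_surjective c
      exact ⟨⟦v⟧, by simp [g, hc]⟩
  have hcard := Fintype.card_le_of_surjective _ hsurj
  rw [Fintype.card_option, Fintype.card_subtype_compl, Fintype.card_coe] at hcard
  have := B.card_le_univ
  unfold ncomp
  omega

/-- Acyclicity in counting form: every nonempty set of vertices spans fewer edges than it has
vertices. -/
def IsForest (G : MGraph ι) : Prop :=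
  ∀ (B : Finset G.V) (S : Finset ι), B.Nonempty →
    (∀ e ∈ S, (G.ends e).1 ∈ B ∧ (G.ends e).2 ∈ B) → S.card < B.card

theorem forest_isForest : G.forest.IsForest := by
  intro B S hB hS
  let S' : Finset ι := S.map (Embedding.subtype _)
  have h_indep := G.ncomp_union_add_card (s := {e | ¬ G.IsBridge e}) S' fun e he => by
    obtain ⟨f, -, rfl⟩ := mem_map.1 he
    exact ⟨f.2, fun h => h f.2⟩
  have h_bound : G.ncomp {e | ¬ G.IsBridge e} + 1
      ≤ G.ncomp ({e | ¬ G.IsBridge e} ∪ S') + B.card :=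
    G.ncomp_add_one_le B hB (by
      rintro e (he | he) hne
      · exact absurd he hne
      · obtain ⟨f, hf, rfl⟩ := mem_map.1 he
        exact hS f hf)
  rw [card_map] at h_indep
  omega

section Leaves

variable {κ : Type} [Fintype ι] [Fintype κ]

theorem leafCount_eq_sum_tsub : G.leafCount = ∑ v, (2 - G.deg v) :=
  sum_congr rfl fun v _ => by split_ifs <;> omega

theorem sum_deg_fiber {W : Type*} [DecidableEq W] (π : G.V → W) (y : W) :
    ∑ x with π x = y, G.deg x = #{e | π (G.ends e).1 = y} + #{e | π (G.ends e).2 = y} := by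
  simp only [deg, sum_add_distrib, sum_card_fiberwise_eq_card_filter, mem_filter, mem_univ,
    true_and]

theorem leafCount_le_of_contraction (H : MGraph κ) (hG : G.IsForest) (π : G.V → H.V)
    (hπ : Surjective π) (j : κ → ι) (hj : Injective j)
    (hends : ∀ k, H.ends k = (π (G.ends (j k)).1, π (G.ends (j k)).2))
    (hdead : ∀ e, e ∉ Set.range j → π (G.ends e).1 = π (G.ends e).2) :
    H.leafCount ≤ G.leafCount := by
  rw [leafCount_eq_sum_tsub, leafCount_eq_sum_tsub, ← sum_fiberwise univ π]
  refine sum_le_sum fun y _ => ?_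
  let D := #{e | π (G.ends e).1 = y ∧ e ∉ Set.range j}
  have hD : D < #{x | π x = y} := by
    refine hG _ _ ?_ fun e he => ?_
    · obtain ⟨x, hx⟩ := hπ y
      exact ⟨x, by simp [hx]⟩
    · simp only [mem_filter, mem_univ, true_and] at he ⊢
      exact ⟨he.1, hdead e he.2 ▸ he.1⟩
  have hdeg : ∑ x with π x = y, G.deg x = H.deg y + 2 * D := by
    have h_dead : #{e | π (G.ends e).2 = y ∧ e ∉ Set.range j} = D :=
      congrArg card <| filter_congr fun e _ => and_congr_left fun he => by rw [hdead e he]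
    rw [sum_deg_fiber,
      card_filter_eq_card_filter_comp_add_notMem_range hj (fun e => π (G.ends e).1 = y),
      card_filter_eq_card_filter_comp_add_notMem_range hj (fun e => π (G.ends e).2 = y), h_dead]
    simp only [deg, hends]
    omega
  calc 2 - H.deg y ≤ ∑ x with π x = y, 2 - ∑ x with π x = y, G.deg x := by
        rw [sum_const, smul_eq_mul, hdeg]
        omega
    _ ≤ ∑ x with π x = y, (2 - G.deg x) := tsub_le_iff_right.2 <| by
        rw [← sum_add_distrib]
        exact sum_le_sum fun _ _ => le_tsub_add

end Leaves

section Quotient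

variable (σ : Setoid G.V)

theorem reachSetoid_le_comap_quot :
    G.reachSetoid s ≤ ((G.quot σ).reachSetoid s).comap (Quotient.mk σ) :=
  G.reachSetoid_le_iff.2 fun _ he => (G.quot σ).reachSetoid_ends he

theorem isBridge_of_isBridge_quot {e : ι} : (G.quot σ).IsBridge e → G.IsBridge e := by
  rw [isBridge_iff, isBridge_iff]
  exact mt (G.reachSetoid_le_comap_quot σ ·)

theorem tecSetoid_le_comap_quot : G.tecSetoid ≤ (G.quot σ).tecSetoid.comap (Quotient.mk σ) :=
  G.reachSetoid_le_iff.2 fun _ he =>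
    (G.quot σ).reachSetoid_ends (mt (G.isBridge_of_isBridge_quot σ) he)

theorem LL_quot_le [Fintype ι] : (G.quot σ).LL ≤ G.LL := by
  let π : Quotient G.tecSetoid → Quotient (G.quot σ).tecSetoid :=
    Quotient.map (Quotient.mk σ) fun _ _ h => G.tecSetoid_le_comap_quot σ h
  refine G.forest.leafCount_le_of_contraction (G.quot σ).forest G.forest_isForest π ?_
    (fun k => ⟨k.1, G.isBridge_of_isBridge_quot σ k.2⟩) ?_ (fun _ => rfl) ?_
  · intro c
    obtain ⟨w, rfl⟩ := Quotient.mk_surjective c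
    obtain ⟨v, rfl⟩ := Quotient.mk_surjective w
    exact ⟨⟦v⟧, rfl⟩
  · exact fun k l hkl => Subtype.ext (congrArg Subtype.val hkl :)
  · rintro ⟨e, he⟩ hdead
    exact Quotient.sound <| (G.quot σ).reachSetoid_ends fun h => hdead ⟨⟨e, h⟩, rfl⟩

end Quotient

section GlueWithinComponent

variable {a b : G.V}

theorem reachSetoid_quot_glue_iff (hab : G.reachSetoid s a b) {x y : G.V} :
    (G.quot (glueSetoid a b)).reachSetoid s ⟦x⟧ ⟦y⟧ ↔ G.reachSetoid s x y := by
  refine ⟨fun hxy => ?_, (G.reachSetoid_le_comap_quot _ ·)⟩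
  let f : Quotient (glueSetoid a b) → Quotient (G.reachSetoid s) :=
    Quotient.lift (Quotient.mk _) <| Setoid.eqvGen_le (s := Setoid.ker _) <| by
      rintro _ _ ⟨rfl, rfl⟩
      exact Quotient.sound hab
  have hf : (G.quot (glueSetoid a b)).reachSetoid s ≤ Setoid.ker f :=
    (G.quot (glueSetoid a b)).reachSetoid_le_iff.2 fun _ he =>
      Quotient.sound (G.reachSetoid_ends he)
  exact Quotient.exact (hf hxy)

theorem isBridge_quot_glue_iff (hab : G.tecSetoid a b) {e : ι} :
    (G.quot (glueSetoid a b)).IsBridge e ↔ G.IsBridge e := by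
  refine ⟨G.isBridge_of_isBridge_quot _, fun hb => ?_⟩
  have hab' : G.reachSetoid {x | x ≠ e} a b :=
    G.reachSetoid_mono (fun f (hf : ¬ G.IsBridge f) (hfe : f = e) => hf (hfe ▸ hb)) hab
  rw [isBridge_iff] at hb ⊢
  exact fun h => hb ((G.reachSetoid_quot_glue_iff hab').1 h)

theorem tecSetoid_quot_glue_iff (hab : G.tecSetoid a b) {x y : G.V} :
    (G.quot (glueSetoid a b)).tecSetoid ⟦x⟧ ⟦y⟧ ↔ G.tecSetoid x y := by
  have h_bridges : {e | ¬ (G.quot (glueSetoid a b)).IsBridge e} = {e | ¬ G.IsBridge e} := by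
    simp only [G.isBridge_quot_glue_iff hab]
  rw [tecSetoid, h_bridges]
  exact G.reachSetoid_quot_glue_iff hab

noncomputable def forestIsoOfGlue (hab : G.tecSetoid a b) :
    MGraphIso (G.quot (glueSetoid a b)).forest G.forest where
  vequiv := (Setoid.quotientEquivOfSurjective (Quotient.mk _) Quotient.mk_surjective
    fun _ _ => (G.tecSetoid_quot_glue_iff hab).symm).symm
  eequiv := Equiv.subtypeEquivRight fun _ => G.isBridge_quot_glue_iff hab
  ends_eq _ := Prod.ext ((Equiv.eq_symm_apply _).2 rfl) ((Equiv.eq_symm_apply _).2 rfl)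

end GlueWithinComponent

end MGraph

theorem glue_vertices_forest_general (ι : Type) [Fintype ι]
    (T : MGraph ι) (a b : T.V) :
    (T.tecSetoid.r a b →
      Nonempty (MGraphIso ((T.quot (glueSetoid a b)).forest) T.forest)) ∧
    (¬ T.tecSetoid.r a b → (T.quot (glueSetoid a b)).LL ≤ T.LL) :=
  ⟨fun hab => ⟨T.forestIsoOfGlue hab⟩, fun _ => T.LL_quot_le _⟩

/-- Identifying two vertices `a, b` lying in the same two-edge connected
component of `T` leaves the forest of two-edge connected components unchanged
(up to isomorphism); identifying two vertices in distinct two-edge connected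
components cannot increase the number of leaves `𝔏`. -/
theorem glue_vertices_forest (ι : Type) [Fintype ι] [DecidableEq ι]
    (T : MGraph ι) (a b : T.V) :
    (T.tecSetoid.r a b →
      Nonempty (MGraphIso ((T.quot (glueSetoid a b)).forest) T.forest)) ∧
    (¬ T.tecSetoid.r a b → (T.quot (glueSetoid a b)).LL ≤ T.LL) :=
  glue_vertices_forest_general ι T a b
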